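/- For any table r and any lists of attributes X, Y, Z: if r satisfies the order compatibility Y ~ Z, then r satisfies the order compatibility X ++ Y ~ X ++ Z. -/

import Mathlib

/-- `ordLE X t s` : the lexicographic weak order `t ≼_X s` induced by a list
of attributes `X` (each attribute is a function `τ → ℤ`). -/
def ordLE {τ : Type*} : List (τ → ℤ) → τ → τ → Prop
  | [], _, _ => True
  | A :: T, t, s => A t < A s ∨ (A t = A s ∧ ordLE T t s)

/-- The table `r` satisfies the order dependency (OD) `X ↦→ Y`. -/
def satOD {τ : Type*} (r : List τ) (X Y : List (τ → ℤ)) : Prop :=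
  ∀ t ∈ r, ∀ s ∈ r, ordLE X t s → ordLE Y t s

/-- `X` and `Y` are order equivalent over `r` (`X ↔ Y`). -/
def orderEquiv {τ : Type*} (r : List τ) (X Y : List (τ → ℤ)) : Prop :=
  satOD r X Y ∧ satOD r Y X

/-- `X` and `Y` are order compatible over `r` (the OCD `X ~ Y`). -/
def satOCD {τ : Type*} (r : List τ) (X Y : List (τ → ℤ)) : Prop :=
  orderEquiv r (X ++ Y) (Y ++ X)

/-- The table `r` satisfies the functional dependency (FD) `X → Y`. -/
def satFD {τ : Type*} (r : List τ) (X Y : Finset (τ → ℤ)) : Prop :=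
  ∀ t ∈ r, ∀ s ∈ r, (∀ A ∈ X, A t = A s) → ∀ B ∈ Y, B t = B s

/-- Attribute `A` is a constant in the context `Z` over `r`
(the set-based canonical OD `Z : [] ↦→ A`). -/
def constIn {τ : Type*} [DecidableEq (τ → ℤ)] (r : List τ) (Z : Finset (τ → ℤ))
    (A : τ → ℤ) : Prop :=
  ∀ Zp : List (τ → ℤ), Zp.Nodup → Zp.toFinset = Z → satOD r Zp (Zp ++ [A])

/-- Attributes `A` and `B` are order compatible in the context `Z` over `r`
(the set-based canonical OCD `Z : A ~ B`). -/
def ocIn {τ : Type*} [DecidableEq (τ → ℤ)] (r : List τ) (Z : Finset (τ → ℤ))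
    (A B : τ → ℤ) : Prop :=
  ∀ Zp : List (τ → ℤ), Zp.Nodup → Zp.toFinset = Z → satOCD r (Zp ++ [A]) (Zp ++ [B])

/-! Lexicographic comparison by `X ++ Y` compares by `X` first and falls back to `Y` exactly
when `t` and `s` agree on `X`. Hence a second copy of `X` after a prefix that starts with `X` is
inert, so `(X ++ Y) ++ (X ++ Z)` orders tuples like `X ++ (Y ++ Z)`, and the OCD `Y ~ Z`
transfers under the common prefix `X`. -/

def agreeOn {τ : Type*} (X : List (τ → ℤ)) (t s : τ) : Prop :=
  ∀ A ∈ X, A t = A s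

section

variable {τ : Type*}

theorem ordLE_of_agreeOn {X : List (τ → ℤ)} {t s : τ} (h : agreeOn X t s) : ordLE X t s := by
  induction X with
  | nil => trivial
  | cons A T ih =>
    simp only [agreeOn, List.forall_mem_cons] at h
    exact Or.inr ⟨h.1, ih h.2⟩

theorem ordLE_append (X Y : List (τ → ℤ)) (t s : τ) :
    ordLE (X ++ Y) t s ↔ ordLE X t s ∧ (agreeOn X t s → ordLE Y t s) := by
  induction X with
  | nil => simp [ordLE, agreeOn]
  | cons A T ih =>
    simp only [List.cons_append, ordLE, ih, agreeOn, List.forall_mem_cons]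
    constructor
    · rintro (hlt | ⟨heq, hT, hY⟩)
      · exact ⟨Or.inl hlt, fun ⟨heq, _⟩ => absurd heq hlt.ne⟩
      · exact ⟨Or.inr ⟨heq, hT⟩, fun ⟨_, hagree⟩ => hY hagree⟩
    · rintro ⟨hlt | ⟨heq, hT⟩, hY⟩
      · exact Or.inl hlt
      · exact Or.inr ⟨heq, hT, fun hagree => hY ⟨heq, hagree⟩⟩

theorem ordLE_append_append_self (X Y W : List (τ → ℤ)) (t s : τ) :
    ordLE (X ++ Y ++ (X ++ W)) t s ↔ ordLE (X ++ (Y ++ W)) t s := by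
  simp only [List.append_assoc, ordLE_append]
  have := @ordLE_of_agreeOn _ X t s
  tauto

theorem satOD_append_left {r : List τ} {Y Z : List (τ → ℤ)} (h : satOD r Y Z)
    (X : List (τ → ℤ)) : satOD r (X ++ Y) (X ++ Z) := by
  intro t ht s hs
  simp only [ordLE_append]
  exact fun ⟨hX, hY⟩ => ⟨hX, fun hagree => h t ht s hs (hY hagree)⟩

theorem satOD_append_append_self {r : List τ} {Y Z : List (τ → ℤ)}
    (h : satOD r (Y ++ Z) (Z ++ Y)) (X : List (τ → ℤ)) :
    satOD r (X ++ Y ++ (X ++ Z)) (X ++ Z ++ (X ++ Y)) := by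
  intro t ht s hs
  simp only [ordLE_append_append_self]
  exact satOD_append_left h X t ht s hs

end

theorem stmt_6 {τ : Type*} (r : List τ) (X Y Z : List (τ → ℤ))
    (h : satOCD r Y Z) : satOCD r (X ++ Y) (X ++ Z) :=
  ⟨satOD_append_append_self h.1 X, satOD_append_append_self h.2 X⟩
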